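/- Let G be a finite simple graph with vertex set V and edge set E, let Jσ, Jτ, Jστ ∈ ℝ, and let A, B ⊆ V. Then Σ_{(σ,τ) : V → {−1,1}²} (∏_{i∈A} σ(i)) (∏_{i∈B} τ(i)) ∏_{{i,j} ∈ E} exp(Jσ σ(i)σ(j) + Jτ τ(i)τ(j) + Jστ σ(i)σ(j)τ(i)τ(j)) = e^{(Jσ+Jτ+Jστ)·|E|} · Σ_{n=(nσ,nτ) : E → {0,1}²} λ(n) · κσ_A(n) · κτ_B(n) · 2^{Nσ(n)} · 2^{Nτ(n)}, where κσ_A(n) = 1 if every connected component of (V, {e : nσ(e)=1}) contains an even number of vertices of A and κσ_A(n) = 0 otherwise, κτ_B is defined analogously with nτ and B, and λ(n) = ∏_{e∈E} (a0 if n(e)=(0,0), aσ if n(e)=(1,0), aτ if n(e)=(0,1), aστ if n(e)=(1,1)) with a0 = e^{−2(Jσ+Jτ)}, aσ = e^{−2Jτ}(e^{−2Jστ} − e^{−2Jσ}), aτ = e^{−2Jσ}(e^{−2Jστ} − e^{−2Jτ}), aστ = 1 − e^{−2(Jσ+Jστ)} − e^{−2(Jτ+Jστ)} + e^{−2(Jσ+Jτ)}.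 In particular, when a0, aσ, aτ, aστ ≥ 0 the free-boundary Ashkin–Teller expectation of σ_A τ_B equals the generalized random-cluster expectation of κσ_A κτ_B at qσ = qτ = 2. -/

import Mathlib

/-- The spin value `±1` attached to a Boolean. -/
def spin (b : Bool) : ℝ := if b then 1 else -1

/-- The number of connected components of the spanning subgraph of the vertex set `V`
with edge set `F`; isolated vertices count as components. -/
noncomputable def numComp {V : Type*} [Fintype V] (F : Set (Sym2 V)) : ℕ :=
  Nat.card (SimpleGraph.fromEdgeSet F).ConnectedComponent

/-- The Ashkin–Teller Boltzmann weight of an edge, as a function on `Sym2 V`. -/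
noncomputable def atWeight {V : Type*} (Jσ Jτ Jστ : ℝ) (σ τ : V → ℝ) : Sym2 V → ℝ :=
  Sym2.lift ⟨fun i j =>
      Real.exp (Jσ * (σ i * σ j) + Jτ * (τ i * τ j) + Jστ * (σ i * σ j * (τ i * τ j))),
    fun i j => by ring_nf⟩

/-- The weight of an edge state: `(0,0) ↦ a0`, `(1,0) ↦ aσ`, `(0,1) ↦ aτ`, `(1,1) ↦ aστ`. -/
def wt (a0 aσ aτ aστ : ℝ) : Bool × Bool → ℝ
  | (false, false) => a0
  | (true, false) => aσ
  | (false, true) => aτ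
  | (true, true) => aστ

/-- The set of edges of `G` declared open by `m`. -/
def openEdges {V : Type*} [Fintype V] [DecidableEq V] (G : SimpleGraph V)
    [DecidableRel G.Adj] (m : G.edgeFinset → Bool) : Set (Sym2 V) :=
  {e : Sym2 V | ∃ h : e ∈ G.edgeFinset, m ⟨e, h⟩ = true}

/-- Number of clusters of the spanning subgraph with open edges `m`. -/
noncomputable def Ncl {V : Type*} [Fintype V] [DecidableEq V] (G : SimpleGraph V)
    [DecidableRel G.Adj] (m : G.edgeFinset → Bool) : ℕ :=
  numComp (openEdges G m)

open Classical in
/-- `kappa F A = 1` if every connected component of the spanning subgraph `(V, F)` contains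
an even number of vertices of `A`, and `0` otherwise. -/
noncomputable def kappa {V : Type*} [Fintype V] (F : Set (Sym2 V)) (A : Finset V) : ℝ :=
  if ∀ C : (SimpleGraph.fromEdgeSet F).ConnectedComponent,
      Even (A.filter (fun i => (SimpleGraph.fromEdgeSet F).connectedComponentMk i = C)).card
  then 1 else 0

/-- The generalized random-cluster weight `λ(n)` associated to the Ashkin–Teller couplings. -/
noncomputable def lamAT {V : Type*} [Fintype V] [DecidableEq V] (G : SimpleGraph V)
    [DecidableRel G.Adj] (Jσ Jτ Jστ : ℝ) (n : G.edgeFinset → Bool × Bool) : ℝ :=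
  ∏ e : G.edgeFinset,
    wt (Real.exp (-2 * (Jσ + Jτ)))
       (Real.exp (-2 * Jτ) * (Real.exp (-2 * Jστ) - Real.exp (-2 * Jσ)))
       (Real.exp (-2 * Jσ) * (Real.exp (-2 * Jστ) - Real.exp (-2 * Jτ)))
       (1 - Real.exp (-2 * (Jσ + Jστ)) - Real.exp (-2 * (Jτ + Jστ)) +
          Real.exp (-2 * (Jσ + Jτ)))
       (n e)

open Classical in
noncomputable def ind (b : Bool) (P : Prop) : ℝ := if b then (if P then 1 else 0) else 1
def agree {V : Type*} (σ : V → Bool) : Sym2 V → Prop :=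
  Sym2.lift ⟨fun i j => σ i = σ j, fun _ _ => propext ⟨Eq.symm, Eq.symm⟩⟩
lemma agree_mk {V : Type*} (σ : V → Bool) (i j : V) : agree σ s(i,j) ↔ (σ i = σ j) := Iff.rfl
lemma spin_mul (a b : Bool) : spin a * spin b = if a = b then 1 else -1 := by
  cases a <;> cases b <;> simp [spin]
open Classical in
lemma ind_eq (b : Bool) (P : Prop) : ind b P = if (b = true → P) then 1 else 0 := by
  cases b <;> simp [ind]

lemma edge_expand {V : Type*} (Jσ Jτ Jστ : ℝ) (σ τ : V → Bool) (e : Sym2 V) :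
    atWeight Jσ Jτ Jστ (fun v => spin (σ v)) (fun v => spin (τ v)) e
    = Real.exp (Jσ + Jτ + Jστ) *
      ∑ p : Bool × Bool,
        wt (Real.exp (-2 * (Jσ + Jτ)))
           (Real.exp (-2 * Jτ) * (Real.exp (-2 * Jστ) - Real.exp (-2 * Jσ)))
           (Real.exp (-2 * Jσ) * (Real.exp (-2 * Jστ) - Real.exp (-2 * Jτ)))
           (1 - Real.exp (-2 * (Jσ + Jστ)) - Real.exp (-2 * (Jτ + Jστ)) +
              Real.exp (-2 * (Jσ + Jτ)))
           p * ind p.1 (agree σ e) * ind p.2 (agree τ e) := by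
  induction e using Sym2.ind with
  | _ i j =>
    simp only [atWeight, Sym2.lift_mk, agree_mk, spin_mul, Fintype.sum_prod_type,
      Fintype.sum_bool, wt, ind]
    by_cases hs : σ i = σ j <;> by_cases ht : τ i = τ j <;>
      · simp only [hs, ht, if_true, if_false, Bool.false_eq_true, mul_one, mul_zero, mul_neg,
          neg_mul, neg_neg, one_mul, zero_mul, add_zero, zero_add, mul_add, mul_sub, add_mul,
          sub_mul, ← Real.exp_add]
        ring_nf

lemma sum_spin_pow (m : ℕ) : ∑ b : Bool, spin b ^ m = if Even m then 2 else 0 := by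
  rcases Nat.even_or_odd m with h | h
  · simp [spin, Fintype.sum_bool, h, h.neg_one_pow]
  · simp [spin, Fintype.sum_bool, h.neg_one_pow, Nat.not_even_iff_odd.mpr h]

open Classical in
lemma const_of_cond {V : Type*} [Fintype V] [DecidableEq V] {G : SimpleGraph V}
    [DecidableRel G.Adj] {n1 : G.edgeFinset → Bool} {σ : V → Bool}
    (h : ∀ e : G.edgeFinset, n1 e = true → agree σ (e : Sym2 V)) :
    ∀ v w : V, (SimpleGraph.fromEdgeSet (openEdges G n1)).Reachable v w → σ v = σ w := by
  intro v w hr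
  obtain ⟨p⟩ := hr
  induction p with
  | nil => rfl
  | cons hadj _ ih =>
    rw [← ih]
    rw [SimpleGraph.fromEdgeSet_adj] at hadj
    obtain ⟨⟨hmem, hopen⟩, _⟩ := hadj
    exact (agree_mk σ _ _).mp (h ⟨_, hmem⟩ hopen)

open Classical in
lemma spin_sum {V : Type*} [Fintype V] [DecidableEq V] (G : SimpleGraph V)
    [DecidableRel G.Adj] (n1 : G.edgeFinset → Bool) (A : Finset V) :
    ∑ σ : V → Bool, (∏ i ∈ A, spin (σ i)) *
        (if ∀ e : G.edgeFinset, n1 e = true → agree σ (e : Sym2 V) then (1:ℝ) else 0)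
    = kappa (openEdges G n1) A * 2 ^ numComp (openEdges G n1) := by
  set H := SimpleGraph.fromEdgeSet (openEdges G n1) with hH
  have : Finite H.ConnectedComponent :=
    Finite.of_surjective H.connectedComponentMk (fun c => c.exists_rep)
  have : Fintype H.ConnectedComponent := Fintype.ofFinite _
  rw [show (∑ σ : V → Bool, (∏ i ∈ A, spin (σ i)) *
        (if ∀ e : G.edgeFinset, n1 e = true → agree σ (e : Sym2 V) then (1:ℝ) else 0)) =
      ∑ σ ∈ Finset.univ.filter
        (fun σ : V → Bool => ∀ e : G.edgeFinset, n1 e = true → agree σ (e : Sym2 V)),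
        ∏ i ∈ A, spin (σ i) by
    rw [Finset.sum_filter]
    exact Finset.sum_congr rfl fun σ _ => by split <;> simp]
  have reindex : (∑ σ ∈ Finset.univ.filter
        (fun σ : V → Bool => ∀ e : G.edgeFinset, n1 e = true → agree σ (e : Sym2 V)),
        ∏ i ∈ A, spin (σ i))
      = ∑ f : H.ConnectedComponent → Bool,
          ∏ i ∈ A, spin (f (H.connectedComponentMk i)) := by
    refine Finset.sum_nbij' (i := fun σ (C : H.ConnectedComponent) => σ C.out)
      (j := fun f v => f (H.connectedComponentMk v)) (fun _ _ => Finset.mem_univ _)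
      ?_ ?_ ?_ ?_
    · intro f _
      refine Finset.mem_filter.mpr ⟨Finset.mem_univ _, fun e he => ?_⟩
      obtain ⟨e, hmem⟩ := e
      induction e using Sym2.ind with
      | _ i j =>
        refine (agree_mk _ i j).mpr ?_
        by_cases hij : i = j
        · rw [hij]
        · have hadj : H.Adj i j :=
            (SimpleGraph.fromEdgeSet_adj _).mpr ⟨⟨hmem, he⟩, hij⟩
          show f (H.connectedComponentMk i) = f (H.connectedComponentMk j)
          exact congrArg f (SimpleGraph.ConnectedComponent.connectedComponentMk_eq_of_adj hadj)
    · intro σ hσ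
      funext v
      have hcond := (Finset.mem_filter.mp hσ).2
      exact const_of_cond hcond _ _
        (SimpleGraph.ConnectedComponent.eq.mp (Quot.out_eq (H.connectedComponentMk v)))
    · intro f _
      funext C
      show f (H.connectedComponentMk (Quot.out C)) = f C
      exact congrArg f (Quot.out_eq C)
    · intro σ hσ
      refine Finset.prod_congr rfl fun i _ => ?_
      have hcond := (Finset.mem_filter.mp hσ).2
      rw [const_of_cond hcond i (Quot.out (H.connectedComponentMk i))
        (SimpleGraph.ConnectedComponent.eq.mp (Quot.out_eq (H.connectedComponentMk i)).symm)]
  rw [reindex]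
  have key : ∀ f : H.ConnectedComponent → Bool,
      (∏ i ∈ A, spin (f (H.connectedComponentMk i))) =
      ∏ C : H.ConnectedComponent,
        spin (f C) ^ (A.filter (fun i => H.connectedComponentMk i = C)).card := by
    intro f
    rw [← Finset.prod_fiberwise_of_maps_to (g := H.connectedComponentMk)
      (t := Finset.univ) (fun i _ => Finset.mem_univ _)]
    refine Finset.prod_congr rfl fun C _ => ?_
    rw [← Finset.prod_const]
    exact Finset.prod_congr rfl fun i hi => by
      rw [(Finset.mem_filter.mp hi).2]
  simp_rw [key]
  rw [show (∑ f : H.ConnectedComponent → Bool, ∏ C : H.ConnectedComponent,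
      spin (f C) ^ (A.filter (fun i => H.connectedComponentMk i = C)).card) =
      ∏ C : H.ConnectedComponent, ∑ b : Bool,
        spin b ^ (A.filter (fun i => H.connectedComponentMk i = C)).card by
    rw [Finset.prod_univ_sum, Fintype.piFinset_univ]]
  simp_rw [sum_spin_pow]
  by_cases hall : ∀ C : H.ConnectedComponent,
      Even (A.filter (fun i => H.connectedComponentMk i = C)).card
  · rw [kappa, if_pos (by simpa using hall)]
    rw [Finset.prod_congr rfl (fun C _ => if_pos (hall C)), Finset.prod_const]
    simp [numComp, Nat.card_eq_fintype_card]
    exact Fintype.card_congr (Equiv.refl _)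
  · push_neg at hall
    obtain ⟨C, hC⟩ := hall
    have h0 : (if Even (A.filter (fun i => H.connectedComponentMk i = C)).card
        then (2:ℝ) else 0) = 0 := if_neg hC
    rw [Finset.prod_eq_zero (Finset.mem_univ C) h0]
    have hk : kappa (openEdges G n1) A = 0 := by
      rw [kappa, if_neg]
      intro h
      exact hC (h C)
    rw [hk]
    ring

open Classical in
lemma prod_expand {V : Type*} [Fintype V] [DecidableEq V] (G : SimpleGraph V)
    [DecidableRel G.Adj] (Jσ Jτ Jστ : ℝ) (σ τ : V → Bool) :
    ∏ e ∈ G.edgeFinset, atWeight Jσ Jτ Jστ (fun v => spin (σ v)) (fun v => spin (τ v)) e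
    = Real.exp (Jσ + Jτ + Jστ) ^ G.edgeFinset.card *
      ∑ n : G.edgeFinset → Bool × Bool, lamAT G Jσ Jτ Jστ n *
        (if ∀ e : G.edgeFinset, (n e).1 = true → agree σ (e : Sym2 V) then (1:ℝ) else 0) *
        (if ∀ e : G.edgeFinset, (n e).2 = true → agree τ (e : Sym2 V) then (1:ℝ) else 0) := by
  rw [← Finset.prod_coe_sort]
  rw [Finset.prod_congr rfl (fun (e : G.edgeFinset) _ => edge_expand Jσ Jτ Jστ σ τ (e : Sym2 V))]
  rw [Finset.prod_mul_distrib, Finset.prod_const, Finset.card_univ, Fintype.card_coe]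
  congr 1
  rw [Finset.prod_univ_sum, Fintype.piFinset_univ]
  refine Finset.sum_congr rfl fun n _ => ?_
  rw [Finset.prod_mul_distrib, Finset.prod_mul_distrib]
  simp_rw [ind_eq]
  rw [Finset.prod_boole, Finset.prod_boole]
  simp only [Finset.mem_univ, forall_true_left, true_implies]
  rfl

lemma swap_lemma {ι κ ε : Type*} [Fintype ι] [Fintype κ] [Fintype ε] (c : ℝ)
    (P : ι → ℝ) (Q : κ → ℝ) (L : ε → ℝ) (I1 : ι → ε → ℝ) (I2 : κ → ε → ℝ) :
    ∑ σ : ι, ∑ τ : κ, P σ * Q τ * (c * ∑ n : ε, L n * I1 σ n * I2 τ n)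
    = c * ∑ n : ε, L n * ((∑ σ : ι, P σ * I1 σ n) * (∑ τ : κ, Q τ * I2 τ n)) := by
  calc ∑ σ : ι, ∑ τ : κ, P σ * Q τ * (c * ∑ n : ε, L n * I1 σ n * I2 τ n)
      = ∑ σ : ι, ∑ τ : κ, ∑ n : ε, P σ * Q τ * (c * (L n * I1 σ n * I2 τ n)) := by
        refine Finset.sum_congr rfl fun σ _ => Finset.sum_congr rfl fun τ _ => ?_
        rw [Finset.mul_sum, Finset.mul_sum]
    _ = ∑ σ : ι, ∑ n : ε, ∑ τ : κ, P σ * Q τ * (c * (L n * I1 σ n * I2 τ n)) := by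
        exact Finset.sum_congr rfl fun σ _ => Finset.sum_comm
    _ = ∑ n : ε, ∑ σ : ι, ∑ τ : κ, P σ * Q τ * (c * (L n * I1 σ n * I2 τ n)) :=
        Finset.sum_comm
    _ = c * ∑ n : ε, L n * ((∑ σ : ι, P σ * I1 σ n) * (∑ τ : κ, Q τ * I2 τ n)) := by
        rw [Finset.mul_sum]
        refine Finset.sum_congr rfl fun n _ => ?_
        rw [Finset.sum_mul_sum, Finset.mul_sum, Finset.mul_sum]
        refine Finset.sum_congr rfl fun σ _ => ?_
        rw [Finset.mul_sum, Finset.mul_sum]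
        exact Finset.sum_congr rfl fun τ _ => by ring

lemma kappa_empty {V : Type*} [Fintype V] (F : Set (Sym2 V)) : kappa F ∅ = 1 := by
  rw [kappa, if_pos]
  intro C
  simp


set_option maxHeartbeats 1600000 in
theorem stmt11 {V : Type*} [Fintype V] [DecidableEq V] (G : SimpleGraph V)
    [DecidableRel G.Adj] (Jσ Jτ Jστ : ℝ) (A B : Finset V) :
    (∑ στ : (V → Bool) × (V → Bool),
        (∏ i ∈ A, spin (στ.1 i)) * (∏ i ∈ B, spin (στ.2 i)) *
          ∏ e ∈ G.edgeFinset,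
            atWeight Jσ Jτ Jστ (fun i => spin (στ.1 i)) (fun i => spin (στ.2 i)) e)
    = Real.exp ((Jσ + Jτ + Jστ) * (G.edgeFinset.card : ℝ)) *
      ∑ n : G.edgeFinset → Bool × Bool,
        lamAT G Jσ Jτ Jστ n * kappa (openEdges G (fun e => (n e).1)) A *
          kappa (openEdges G (fun e => (n e).2)) B *
          2 ^ Ncl G (fun e => (n e).1) * 2 ^ Ncl G (fun e => (n e).2)
    ∧
    (0 ≤ Real.exp (-2 * Jτ) * (Real.exp (-2 * Jστ) - Real.exp (-2 * Jσ)) →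
     0 ≤ Real.exp (-2 * Jσ) * (Real.exp (-2 * Jστ) - Real.exp (-2 * Jτ)) →
     0 ≤ 1 - Real.exp (-2 * (Jσ + Jστ)) - Real.exp (-2 * (Jτ + Jστ)) +
          Real.exp (-2 * (Jσ + Jτ)) →
     (∑ στ : (V → Bool) × (V → Bool),
          (∏ i ∈ A, spin (στ.1 i)) * (∏ i ∈ B, spin (στ.2 i)) *
            ∏ e ∈ G.edgeFinset,
              atWeight Jσ Jτ Jστ (fun i => spin (στ.1 i)) (fun i => spin (στ.2 i)) e) /
       (∑ στ : (V → Bool) × (V → Bool),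
          ∏ e ∈ G.edgeFinset,
            atWeight Jσ Jτ Jστ (fun i => spin (στ.1 i)) (fun i => spin (στ.2 i)) e)
     = (∑ n : G.edgeFinset → Bool × Bool,
          lamAT G Jσ Jτ Jστ n * kappa (openEdges G (fun e => (n e).1)) A *
            kappa (openEdges G (fun e => (n e).2)) B *
            2 ^ Ncl G (fun e => (n e).1) * 2 ^ Ncl G (fun e => (n e).2)) /
       (∑ n : G.edgeFinset → Bool × Bool,
          lamAT G Jσ Jτ Jστ n *
            2 ^ Ncl G (fun e => (n e).1) * 2 ^ Ncl G (fun e => (n e).2))) := by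
  have main : ∀ A B : Finset V,
      (∑ στ : (V → Bool) × (V → Bool),
        (∏ i ∈ A, spin (στ.1 i)) * (∏ i ∈ B, spin (στ.2 i)) *
          ∏ e ∈ G.edgeFinset,
            atWeight Jσ Jτ Jστ (fun i => spin (στ.1 i)) (fun i => spin (στ.2 i)) e)
      = Real.exp ((Jσ + Jτ + Jστ) * (G.edgeFinset.card : ℝ)) *
        ∑ n : G.edgeFinset → Bool × Bool,
          lamAT G Jσ Jτ Jστ n * kappa (openEdges G (fun e => (n e).1)) A *
            kappa (openEdges G (fun e => (n e).2)) B *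
            2 ^ Ncl G (fun e => (n e).1) * 2 ^ Ncl G (fun e => (n e).2) := by
    intro A B
    classical
    rw [mul_comm (Jσ + Jτ + Jστ) (G.edgeFinset.card : ℝ), Real.exp_nat_mul]
    rw [Fintype.sum_prod_type]
    simp_rw [prod_expand G Jσ Jτ Jστ]
    have hterm : ∀ n : G.edgeFinset → Bool × Bool,
        lamAT G Jσ Jτ Jστ n * kappa (openEdges G (fun e => (n e).1)) A *
          kappa (openEdges G (fun e => (n e).2)) B *
          2 ^ Ncl G (fun e => (n e).1) * 2 ^ Ncl G (fun e => (n e).2)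
        = lamAT G Jσ Jτ Jστ n *
          ((∑ σ : V → Bool, (∏ i ∈ A, spin (σ i)) *
            (if ∀ e : G.edgeFinset, (n e).1 = true → agree σ (e : Sym2 V) then (1:ℝ) else 0)) *
           (∑ τ : V → Bool, (∏ i ∈ B, spin (τ i)) *
            (if ∀ e : G.edgeFinset, (n e).2 = true → agree τ (e : Sym2 V) then (1:ℝ) else 0))) := by
      intro n
      rw [spin_sum G (fun e => (n e).1) A, spin_sum G (fun e => (n e).2) B]
      show _ = _ * ((kappa _ A * 2 ^ Ncl G _) * (kappa _ B * 2 ^ Ncl G _))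
      ring
    rw [swap_lemma (Real.exp (Jσ + Jτ + Jστ) ^ G.edgeFinset.card)
      (fun σ => ∏ i ∈ A, spin (σ i)) (fun τ => ∏ i ∈ B, spin (τ i))
      (lamAT G Jσ Jτ Jστ)
      (fun σ n => if ∀ e : G.edgeFinset, (n e).1 = true → agree σ (e : Sym2 V)
        then (1:ℝ) else 0)
      (fun τ n => if ∀ e : G.edgeFinset, (n e).2 = true → agree τ (e : Sym2 V)
        then (1:ℝ) else 0)]
    congr 1
    exact (Finset.sum_congr rfl fun n _ => hterm n).symm
  refine ⟨main A B, fun _ _ _ => ?_⟩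
  have h0 := main ∅ ∅
  simp only [Finset.prod_empty, one_mul, kappa_empty, mul_one] at h0
  rw [main A B, h0, mul_div_mul_left _ _ (Real.exp_ne_zero _)]
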